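/- Let Δᵀ = ±Δ be invertible, let Ω̃ be an n×n matrix, let R be Δ-symmetric unipotent (φ_Δ(R) = R) and O be Δ-orthogonal unipotent (φ_Δ(O) = O⁻¹), and set A = O·R·Ω̃·R⁻¹·O⁻¹. If A satisfies the self-duality relation A = φ_Δ(A) = Δ·Aᵀ·Δ⁻¹, then R²·Ω̃ = φ_Δ(Ω̃)·R². In particular the Δ-orthogonal factor O drops out of this constraint. -/

import Mathlib

open Matrix

def UnipLT {n : ℕ} {K : Type*} [Field K] (M : Matrix (Fin n) (Fin n) K) : Prop :=
  (∀ i, M i i = 1) ∧ ∀ i j : Fin n, i < j → M i j = 0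

noncomputable def phiD {n : ℕ} {K : Type*} [Field K]
    (Δ M : Matrix (Fin n) (Fin n) K) : Matrix (Fin n) (Fin n) K :=
  Δ * Mᵀ * Δ⁻¹

/-! Writing `A = P Ω P⁻¹` with `P = O R`, the hypotheses on `O` and `R` give
`φ_Δ(P) = R O⁻¹`, so `φ_Δ(A) = O R⁻¹ φ_Δ(Ω) R O⁻¹`. Self-duality then says that conjugating by
`O` sends `R Ω R⁻¹` and `R⁻¹ φ_Δ(Ω) R` to the same matrix; cancelling `O` and clearing `R`
gives `R² Ω = φ_Δ(Ω) R²`. -/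

theorem UnipLT.isUnit_det {n : ℕ} {K : Type*} [Field K] {M : Matrix (Fin n) (Fin n) K}
    (h : UnipLT M) : IsUnit M.det := by
  simp [det_of_isLowerTriangular M h.2, h.1]

section phiD

variable {n : ℕ} {K : Type*} [Field K] {Δ : Matrix (Fin n) (Fin n) K}

theorem phiD_mul (hΔ : IsUnit Δ.det) (M N : Matrix (Fin n) (Fin n) K) :
    phiD Δ (M * N) = phiD Δ N * phiD Δ M := by
  simp only [phiD, transpose_mul, Matrix.mul_assoc, nonsing_inv_mul_cancel_left _ _ hΔ]

theorem phiD_inv (hΔ : IsUnit Δ.det) (M : Matrix (Fin n) (Fin n) K) :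
    phiD Δ M⁻¹ = (phiD Δ M)⁻¹ := by
  simp only [phiD, transpose_nonsing_inv, Matrix.mul_inv_rev, nonsing_inv_nonsing_inv Δ hΔ,
    Matrix.mul_assoc]

theorem phiD_conj (hΔ : IsUnit Δ.det) (P M : Matrix (Fin n) (Fin n) K) :
    phiD Δ (P * M * P⁻¹) = (phiD Δ P)⁻¹ * phiD Δ M * phiD Δ P := by
  rw [phiD_mul hΔ, phiD_mul hΔ, phiD_inv hΔ, Matrix.mul_assoc]

end phiD

section Conjugation

variable {m : Type*} [Fintype m] [DecidableEq m] {K : Type*} [Field K]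

theorem conj_eq_conj_iff {P X Y : Matrix m m K} (hP : IsUnit P.det) :
    P * X * P⁻¹ = P * Y * P⁻¹ ↔ X = Y := by
  refine ⟨fun h => ?_, fun h => h ▸ rfl⟩
  simpa [Matrix.mul_assoc, nonsing_inv_mul_cancel_left _ _ hP,
    nonsing_inv_mul_cancel_right _ _ hP] using congrArg (fun Z => P⁻¹ * Z * P) h

theorem sq_mul_eq_mul_sq_of_conj_eq_inv_conj {R X Y : Matrix m m K} (hR : IsUnit R.det)
    (h : R * X * R⁻¹ = R⁻¹ * Y * R) : R ^ 2 * X = Y * R ^ 2 :=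
  calc R ^ 2 * X = R * (R * X * R⁻¹) * R := by
        rw [Matrix.mul_assoc R, nonsing_inv_mul_cancel_right _ _ hR, pow_two, Matrix.mul_assoc]
    _ = R * (R⁻¹ * Y * R) * R := by rw [h]
    _ = Y * R ^ 2 := by
        simp only [Matrix.mul_assoc, mul_nonsing_inv_cancel_left _ _ hR, pow_two]

end Conjugation

theorem selfdual_constraint_on_R_general {n : ℕ} {K : Type*} [Field K]
    (Δ Ω O R : Matrix (Fin n) (Fin n) K) (hdet : IsUnit Δ.det)
    (hO : UnipLT O) (hOorth : phiD Δ O = O⁻¹)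
    (hR : UnipLT R) (hRsym : phiD Δ R = R)
    (hself : O * R * Ω * R⁻¹ * O⁻¹ = phiD Δ (O * R * Ω * R⁻¹ * O⁻¹)) :
    R ^ 2 * Ω = phiD Δ Ω * R ^ 2 := by
  have hOR : O * R * Ω * R⁻¹ * O⁻¹ = (O * R) * Ω * (O * R)⁻¹ := by
    rw [Matrix.mul_inv_rev, Matrix.mul_assoc _ R⁻¹]
  have hphi_OR : phiD Δ (O * R) = R * O⁻¹ := by rw [phiD_mul hdet, hRsym, hOorth]
  have hphi_OR_inv : (phiD Δ (O * R))⁻¹ = O * R⁻¹ := by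
    rw [hphi_OR, Matrix.mul_inv_rev, nonsing_inv_nonsing_inv O hO.isUnit_det]
  have hconj : O * (R * Ω * R⁻¹) * O⁻¹ = O * (R⁻¹ * phiD Δ Ω * R) * O⁻¹ :=
    calc O * (R * Ω * R⁻¹) * O⁻¹ = phiD Δ ((O * R) * Ω * (O * R)⁻¹) := by
          rw [← hOR, ← hself]; noncomm_ring
      _ = O * (R⁻¹ * phiD Δ Ω * R) * O⁻¹ := by
          rw [phiD_conj hdet, hphi_OR_inv, hphi_OR]; noncomm_ring
  exact sq_mul_eq_mul_sq_of_conj_eq_inv_conj hR.isUnit_det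
    ((conj_eq_conj_iff hO.isUnit_det).mp hconj)

/-- if A = O·R·Ω̃·R⁻¹·O⁻¹ is self-dual (A = φ_Δ(A)) with R
Δ-symmetric unipotent and O Δ-orthogonal unipotent, then R²·Ω̃ = φ_Δ(Ω̃)·R². -/
theorem selfdual_constraint_on_R {n : ℕ} {K : Type*} [Field K]
    (Δ Ω O R : Matrix (Fin n) (Fin n) K) (hdet : IsUnit Δ.det)
    (hsym : Δᵀ = Δ ∨ Δᵀ = -Δ)
    (hO : UnipLT O) (hOorth : phiD Δ O = O⁻¹)
    (hR : UnipLT R) (hRsym : phiD Δ R = R)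
    (hself : O * R * Ω * R⁻¹ * O⁻¹ = phiD Δ (O * R * Ω * R⁻¹ * O⁻¹)) :
    R ^ 2 * Ω = phiD Δ Ω * R ^ 2 :=
  selfdual_constraint_on_R_general Δ Ω O R hdet hO hOorth hR hRsym hself
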